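/- With the notation Y_{1,i}, Y_{2,j} (1 ≤ i, j ≤ h) for monomials with pairwise disjoint supports, and u_{i,j} = Y_{1,i}Y_{2,j} for i < j ordered as in Proposition on B_{ℓ,h}: for j − i ≥ 3, ((u_{p,q} : (p,q) precedes (i,j)) : u_{i,j−1}) equals the ideal (Y_{1,j−2},…,Y_{1,i+1}, Y_{2,j},…,Y_{2,h}); i.e., the colon of the ideal generated by all earlier u's by u_{i,j−1} is generated by these h − i − 1 monomials with pairwise disjoint supports. -/

import Mathlib

/-!
All ideals involved are monomial ideals, so a polynomial lies in the colon ideal by `x^e`,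
`e = y1 i + y2 (j - 1)`, iff each of its exponents `c` satisfies `m ≤ c + e` for the exponent `m`
of some earlier generator. Disjointness of supports turns `y1 p ≤ c + e` into `y1 p ≤ c` for
`p ≠ i`, and `y2 q ≤ c + e` into `y2 q ≤ c` for `q ≠ j - 1`. Hence an earlier `u_{p,q}` with
`i < p ≤ j - 2` contributes `Y_{1,p}` (attained by `u_{p,j-1}`), and every other earlier `u_{p,q}`
has `q ≥ j` and contributes `Y_{2,q}` (attained by `u_{i,q}`).
-/

open MvPolynomial

theorem Finsupp.le_of_le_add_of_disjoint {ι : Type*} {a c e : ι →₀ ℕ}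
    (hd : Disjoint a.support e.support) (h : a ≤ c + e) : a ≤ c := fun x => by
  by_cases hx : x ∈ a.support
  · simpa [Finsupp.notMem_support_iff.mp (Finset.disjoint_left.mp hd hx)] using h x
  · simp [Finsupp.notMem_support_iff.mp hx]

theorem Finsupp.disjoint_support_add {ι M : Type*} [AddZeroClass M] {a b c : ι →₀ M}
    (hb : Disjoint a.support b.support) (hc : Disjoint a.support c.support) :
    Disjoint a.support (b + c).support := by
  classical
  exact (Finset.disjoint_union_right.mpr ⟨hb, hc⟩).mono_right Finsupp.support_add

namespace MvPolynomial

variable {σ R : Type*} [CommSemiring R]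

theorem support_mul_monomial_one (f : MvPolynomial σ R) (e : σ →₀ ℕ) :
    (f * monomial e 1).support = f.support.map (addRightEmbedding e) :=
  AddMonoidAlgebra.support_coeff_mul_single f 1 (by simp) e

theorem colon_span_monomial_image {S T : Set (σ →₀ ℕ)} {e : σ →₀ ℕ}
    (h : ∀ c, (∃ m ∈ S, m ≤ c + e) ↔ ∃ t ∈ T, t ≤ c) :
    (Ideal.span ((fun m => monomial m (1 : R)) '' S)).colon (Ideal.span {monomial e (1 : R)}) =
      Ideal.span ((fun m => monomial m (1 : R)) '' T) := by
  ext f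
  rw [Ideal.mem_colon_span_singleton, mem_ideal_span_monomial_image, mem_ideal_span_monomial_image,
    support_mul_monomial_one]
  simp [h]

end MvPolynomial

section Exponents

variable {ι : Type*} (y1 y2 : ℕ → ι →₀ ℕ) (h i j : ℕ)

def precedingExponents : Set (ι →₀ ℕ) :=
  {m | ∃ p q, 1 ≤ p ∧ p < q ∧ q ≤ h ∧ (i < p ∨ (p = i ∧ j ≤ q)) ∧ m = y1 p + y2 q}

def colonExponents : Set (ι →₀ ℕ) :=
  {m | ∃ s, i + 1 ≤ s ∧ s ≤ j - 2 ∧ m = y1 s} ∪ {m | ∃ s, j ≤ s ∧ s ≤ h ∧ m = y2 s}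

variable {y1 y2 h i j}

theorem exists_precedingExponents_le_add_iff (hi : 1 ≤ i) (hij : i + 3 ≤ j) (hj : j ≤ h)
    (hd1 : ∀ p, 1 ≤ p → p ≤ h → p ≠ i → Disjoint (y1 p).support (y1 i + y2 (j - 1)).support)
    (hd2 : ∀ q, 1 ≤ q → q ≤ h → q ≠ j - 1 →
      Disjoint (y2 q).support (y1 i + y2 (j - 1)).support)
    (c : ι →₀ ℕ) :
    (∃ m ∈ precedingExponents y1 y2 h i j, m ≤ c + (y1 i + y2 (j - 1))) ↔
      ∃ t ∈ colonExponents y1 y2 h i j, t ≤ c := by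
  constructor
  · rintro ⟨_, ⟨p, q, hp, hpq, hq, hpos, rfl⟩, hle⟩
    have hy1 : y1 p ≤ c + (y1 i + y2 (j - 1)) := le_self_add.trans hle
    have hy2 : y2 q ≤ c + (y1 i + y2 (j - 1)) := le_add_self.trans hle
    by_cases hpj : i < p ∧ p ≤ j - 2
    · exact ⟨y1 p, Or.inl ⟨p, hpj.1, hpj.2, rfl⟩,
        Finsupp.le_of_le_add_of_disjoint (hd1 p hp (by omega) (by omega)) hy1⟩
    · exact ⟨y2 q, Or.inr ⟨q, by omega, hq, rfl⟩,
        Finsupp.le_of_le_add_of_disjoint (hd2 q (by omega) hq (by omega)) hy2⟩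
  · rintro ⟨_, ⟨s, hs, hsj, rfl⟩ | ⟨s, hs, hsh, rfl⟩, hle⟩
    · exact ⟨y1 s + y2 (j - 1), ⟨s, j - 1, by omega, by omega, by omega, by omega, rfl⟩,
        add_le_add hle le_add_self⟩
    · refine ⟨y1 i + y2 s, ⟨i, s, hi, by omega, hsh, by omega, rfl⟩, ?_⟩
      rw [add_comm c]
      exact add_le_add le_self_add hle

end Exponents

theorem stmt_15_general {K : Type} [Field K] {σ : Type} (h : ℕ)
    (y1 y2 : ℕ → (σ →₀ ℕ))
    (hdisj11 : ∀ i j, 1 ≤ i → i ≤ h → 1 ≤ j → j ≤ h → i ≠ j →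
      Disjoint (y1 i).support (y1 j).support)
    (hdisj22 : ∀ i j, 1 ≤ i → i ≤ h → 1 ≤ j → j ≤ h → i ≠ j →
      Disjoint (y2 i).support (y2 j).support)
    (hdisj12 : ∀ i j, 1 ≤ i → i ≤ h → 1 ≤ j → j ≤ h →
      Disjoint (y1 i).support (y2 j).support)
    (Y1 Y2 : ℕ → MvPolynomial σ K)
    (hY1 : ∀ i, Y1 i = monomial (y1 i) 1) (hY2 : ∀ i, Y2 i = monomial (y2 i) 1)
    (u : ℕ → ℕ → MvPolynomial σ K) (hu : ∀ i j, u i j = Y1 i * Y2 j)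
    (i j : ℕ) (hi : 1 ≤ i) (hij : i + 3 ≤ j) (hj : j ≤ h) :
    (Ideal.span {x | ∃ p q, 1 ≤ p ∧ p < q ∧ q ≤ h ∧ (i < p ∨ (p = i ∧ j ≤ q)) ∧
        x = u p q}).colon (Ideal.span {u i (j - 1)})
      = Ideal.span
          ({x | ∃ s, i + 1 ≤ s ∧ s ≤ j - 2 ∧ x = Y1 s} ∪
           {x | ∃ s, j ≤ s ∧ s ≤ h ∧ x = Y2 s}) := by
  have hu_monomial : ∀ p q, u p q = monomial (y1 p + y2 q) (1 : K) := fun p q => by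
    rw [hu, hY1, hY2, monomial_mul, one_mul]
  have hS : {x | ∃ p q, 1 ≤ p ∧ p < q ∧ q ≤ h ∧ (i < p ∨ (p = i ∧ j ≤ q)) ∧ x = u p q} =
      (fun m => monomial m 1) '' precedingExponents y1 y2 h i j := by
    ext x
    simp only [precedingExponents, hu_monomial, Set.mem_image, Set.mem_ofPred_eq]
    constructor
    · rintro ⟨p, q, hp, hpq, hq, hpos, rfl⟩
      exact ⟨_, ⟨p, q, hp, hpq, hq, hpos, rfl⟩, rfl⟩
    · rintro ⟨_, ⟨p, q, hp, hpq, hq, hpos, rfl⟩, rfl⟩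
      exact ⟨p, q, hp, hpq, hq, hpos, rfl⟩
  have hT : {x | ∃ s, i + 1 ≤ s ∧ s ≤ j - 2 ∧ x = Y1 s} ∪ {x | ∃ s, j ≤ s ∧ s ≤ h ∧ x = Y2 s} =
      (fun m => monomial m 1) '' colonExponents y1 y2 h i j := by
    rw [colonExponents, Set.image_union]
    congr 1 <;> ext x <;> simp [hY1, hY2, and_assoc, eq_comm]
  rw [hS, hT, hu_monomial]
  refine colon_span_monomial_image (exists_precedingExponents_le_add_iff hi hij hj ?_ ?_)
  · exact fun p hp hph hpi => Finsupp.disjoint_support_add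
      (hdisj11 p i hp hph hi (by omega) hpi) (hdisj12 p (j - 1) hp hph (by omega) (by omega))
  · exact fun q hq hqh hqj => Finsupp.disjoint_support_add
      (hdisj12 i q hi (by omega) hq hqh).symm (hdisj22 q (j - 1) hq hqh (by omega) (by omega) hqj)

/-- Colon ideal computation for the ordered generators `u_{i,j} = Y_{1,i}Y_{2,j}`:
for support-disjoint monomials `Y_{1,1},…,Y_{1,h},Y_{2,1},…,Y_{2,h}` all of degree `ℓ`,
with `u_{i,j}` ordered so that `u_{i,j}` precedes `u_{i',j'}` iff `i > i'`, or `i = i'`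
and `j > j'`: for `j − i ≥ 3`, the colon of the ideal generated by all `u`'s preceding
`u_{i,j-1}` by `u_{i,j-1}` equals `(Y_{1,i+1},…,Y_{1,j−2}, Y_{2,j},…,Y_{2,h})`. -/
theorem stmt_15 {K : Type} [Field K] {σ : Type} (h ℓ : ℕ) (hh : 2 ≤ h) (hℓ : 1 ≤ ℓ)
    (y1 y2 : ℕ → (σ →₀ ℕ))
    (hdeg1 : ∀ i, 1 ≤ i → i ≤ h → (monomial (y1 i) (1 : K)).totalDegree = ℓ)
    (hdeg2 : ∀ i, 1 ≤ i → i ≤ h → (monomial (y2 i) (1 : K)).totalDegree = ℓ)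
    (hdisj11 : ∀ i j, 1 ≤ i → i ≤ h → 1 ≤ j → j ≤ h → i ≠ j →
      Disjoint (y1 i).support (y1 j).support)
    (hdisj22 : ∀ i j, 1 ≤ i → i ≤ h → 1 ≤ j → j ≤ h → i ≠ j →
      Disjoint (y2 i).support (y2 j).support)
    (hdisj12 : ∀ i j, 1 ≤ i → i ≤ h → 1 ≤ j → j ≤ h →
      Disjoint (y1 i).support (y2 j).support)
    (Y1 Y2 : ℕ → MvPolynomial σ K)
    (hY1 : ∀ i, Y1 i = monomial (y1 i) 1) (hY2 : ∀ i, Y2 i = monomial (y2 i) 1)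
    (u : ℕ → ℕ → MvPolynomial σ K) (hu : ∀ i j, u i j = Y1 i * Y2 j)
    (i j : ℕ) (hi : 1 ≤ i) (hij : i + 3 ≤ j) (hj : j ≤ h) :
    (Ideal.span {x | ∃ p q, 1 ≤ p ∧ p < q ∧ q ≤ h ∧ (i < p ∨ (p = i ∧ j ≤ q)) ∧
        x = u p q}).colon (Ideal.span {u i (j - 1)})
      = Ideal.span
          ({x | ∃ s, i + 1 ≤ s ∧ s ≤ j - 2 ∧ x = Y1 s} ∪
           {x | ∃ s, j ≤ s ∧ s ≤ h ∧ x = Y2 s}) :=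
  stmt_15_general h y1 y2 hdisj11 hdisj22 hdisj12 Y1 Y2 hY1 hY2 u hu i j hi hij hj
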